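/- The antipode S of the Connes–Moscovici algebra satisfies the second Hopf algebroid antipode axiom μ_H(id ⊗ S)Δ_r = s_l ε_l; explicitly, for all a, b ∈ A and q ∈ Q: Σ (a ⊗ q₍₁₎ ⊗ 1)·S(1 ⊗ q₍₂₎ ⊗ b) = (a ε(q) b) ⊗ 1 ⊗ 1, where the product is taken in H. -/

import Mathlib

open TensorProduct

noncomputable section

/-- `(id ⊗ Δ) ∘ Δ : Q → Q ⊗ (Q ⊗ Q)`, producing the Sweedler legs
`q₍₁₎ ⊗ q₍₂₎ ⊗ q₍₃₎` of the iterated coproduct. -/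
def comul2 (Q : Type*) [Ring Q] [HopfAlgebra ℂ Q] :
    Q →ₗ[ℂ] Q ⊗[ℂ] (Q ⊗[ℂ] Q) :=
  (LinearMap.lTensor Q (Coalgebra.comul (R := ℂ))).comp (Coalgebra.comul (R := ℂ))

/-- The right-hand side `Σ a (q₍₁₎·a') ⊗ q₍₂₎ q' ⊗ (q₍₃₎·b') b` of the
Connes–Moscovici product formula on `H = A ⊗ Q ⊗ A`. -/
def cmMulRHS {Q A : Type*} [Ring Q] [HopfAlgebra ℂ Q] [Ring A] [Algebra ℂ A]
    (act : Q →ₗ[ℂ] A →ₗ[ℂ] A) (a : A) (q : Q) (b : A) (a' : A) (q' : Q) (b' : A) :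
    A ⊗[ℂ] (Q ⊗[ℂ] A) :=
  TensorProduct.map ((LinearMap.mulLeft ℂ a).comp (act.flip a'))
    (TensorProduct.map (LinearMap.mulRight ℂ q')
      ((LinearMap.mulRight ℂ b).comp (act.flip b')))
    (comul2 Q q)

/-- The order-reversing map `A ⊗ (Q ⊗ A) → A ⊗ (Q ⊗ A)`, `x ⊗ y ⊗ z ↦ z ⊗ y ⊗ x`. -/
def cmRev {Q A : Type*} [Ring Q] [HopfAlgebra ℂ Q] [Ring A] [Algebra ℂ A] :
    (A ⊗[ℂ] (Q ⊗[ℂ] A)) →ₗ[ℂ] (A ⊗[ℂ] (Q ⊗[ℂ] A)) :=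
  (TensorProduct.congr (LinearEquiv.refl ℂ A) (TensorProduct.comm ℂ Q A) ≪≫ₗ
    (TensorProduct.assoc ℂ A A Q).symm ≪≫ₗ
    TensorProduct.congr (TensorProduct.comm ℂ A A) (LinearEquiv.refl ℂ Q) ≪≫ₗ
    TensorProduct.assoc ℂ A A Q ≪≫ₗ
    TensorProduct.congr (LinearEquiv.refl ℂ A) (TensorProduct.comm ℂ A Q)).toLinearMap

/-- The value `Σ T(q₍₃₎)·b ⊗ T(q₍₂₎) ⊗ T(q₍₁₎)·a` of the antipode of the
Connes–Moscovici algebra on an elementary tensor `a ⊗ q ⊗ b`. -/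
def cmAntipodeRHS {Q A : Type*} [Ring Q] [HopfAlgebra ℂ Q] [Ring A] [Algebra ℂ A]
    (act : Q →ₗ[ℂ] A →ₗ[ℂ] A) (a : A) (q : Q) (b : A) :
    A ⊗[ℂ] (Q ⊗[ℂ] A) :=
  cmRev
    (TensorProduct.map ((act.flip a).comp (HopfAlgebra.antipode (R := ℂ)))
      (TensorProduct.map (HopfAlgebra.antipode (R := ℂ))
        ((act.flip b).comp (HopfAlgebra.antipode (R := ℂ))))
      (comul2 Q q))

/-- The linear map `Q →ₗ H`, `x ↦ a ⊗ x ⊗ 1`. -/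
def cmLegL {Q A : Type*} [Ring Q] [HopfAlgebra ℂ Q] [Ring A] [Algebra ℂ A] (a : A) :
    Q →ₗ[ℂ] A ⊗[ℂ] (Q ⊗[ℂ] A) :=
  (TensorProduct.mk ℂ A (Q ⊗[ℂ] A) a).comp ((TensorProduct.mk ℂ Q A).flip 1)

/-- The linear map `Q →ₗ H`, `x ↦ 1 ⊗ x ⊗ b`. -/
def cmLegR {Q A : Type*} [Ring Q] [HopfAlgebra ℂ Q] [Ring A] [Algebra ℂ A] (b : A) :
    Q →ₗ[ℂ] A ⊗[ℂ] (Q ⊗[ℂ] A) :=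
  (TensorProduct.mk ℂ A (Q ⊗[ℂ] A) 1).comp ((TensorProduct.mk ℂ Q A).flip b)


/-! Expanding both factors of the left-hand side gives
`Σ a (q₍₁₎·(T(q₍₄₎)·b)) ⊗ q₍₂₎T(q₍₃₎) ⊗ 1`. By coassociativity the middle legs form the
coproduct of a single leg, so `Σ q₍₁₎ ⊗ q₍₂₎T(q₍₃₎) ⊗ q₍₄₎ = Σ q₍₁₎ ⊗ 1 ⊗ q₍₂₎`, and what remains
is `Σ a (q₍₁₎T(q₍₂₎))·b = ε(q) a b`. -/

open Coalgebra HopfAlgebra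

section Coalgebra

variable {R C M N : Type*} [CommSemiring R] [AddCommMonoid C] [Module R C] [Coalgebra R C]
  [AddCommMonoid M] [Module R M] [AddCommMonoid N] [Module R N]

theorem map_smulRight_counit_comp_comul (g : C →ₗ[R] M) (n : N) :
    map ((counit : C →ₗ[R] R).smulRight n) g ∘ₗ comul = TensorProduct.mk R N M n ∘ₗ g := by
  have hfactor : map ((counit : C →ₗ[R] R).smulRight n) g =
      (LinearMap.toSpanSingleton R N n).rTensor M ∘ₗ map counit g := by
    ext; simp
  rw [hfactor, LinearMap.comp_assoc, CoassocSimps.map_counit_comp_comul_left]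
  ext; simp

theorem map_comp_smulRight_counit_comul (g : C →ₗ[R] M) (n : N) :
    map g ((counit : C →ₗ[R] R).smulRight n) ∘ₗ comul = (TensorProduct.mk R M N).flip n ∘ₗ g := by
  have hfactor : map g ((counit : C →ₗ[R] R).smulRight n) =
      (LinearMap.toSpanSingleton R N n).lTensor M ∘ₗ map g counit := by
    ext; simp
  rw [hfactor, LinearMap.comp_assoc, CoassocSimps.map_counit_comp_comul_right]
  ext; simp

end Coalgebra

section HopfAlgebra

variable (R Q : Type*) [CommSemiring R] [Semiring Q] [HopfAlgebra R Q]

def mulAntipodeMiddle : (Q ⊗[R] Q) ⊗[R] (Q ⊗[R] Q) →ₗ[R] Q ⊗[R] (Q ⊗[R] Q) :=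
  LinearMap.lTensor Q (LinearMap.rTensor Q (LinearMap.mul' R Q ∘ₗ (antipode R).lTensor Q)) ∘ₗ
    LinearMap.lTensor Q (TensorProduct.assoc R Q Q Q).symm.toLinearMap ∘ₗ
    (TensorProduct.assoc R Q Q (Q ⊗[R] Q)).toLinearMap

variable {R Q}

@[simp]
theorem mulAntipodeMiddle_tmul (x₁ x₂ y₁ y₂ : Q) :
    mulAntipodeMiddle R Q ((x₁ ⊗ₜ x₂) ⊗ₜ (y₁ ⊗ₜ y₂)) = x₁ ⊗ₜ ((x₂ * antipode R y₁) ⊗ₜ y₂) := by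
  simp [mulAntipodeMiddle]

theorem mulAntipodeMiddle_map_comul_comul (q : Q) :
    mulAntipodeMiddle R Q (map comul comul (comul q)) =
      LinearMap.lTensor Q (TensorProduct.mk R Q Q 1) (comul q) := by
  suffices mulAntipodeMiddle R Q ∘ₗ map comul comul ∘ₗ comul =
      LinearMap.lTensor Q (TensorProduct.mk R Q Q 1) ∘ₗ comul from congr($this q)
  simp only [mulAntipodeMiddle, coassoc_simps]
  rw [show map LinearMap.id (antipode R) = (antipode R).lTensor Q from rfl,
    mul_antipode_lTensor_comul]
  congr 2
  ext x
  rw [LinearMap.comp_apply, ← LinearMap.rTensor_def, LinearMap.rTensor_comp_apply,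
    rTensor_counit_comul]
  simp

end HopfAlgebra

section ConnesMoscovici

variable {Q A : Type*} [Ring Q] [HopfAlgebra ℂ Q] [Ring A] [Algebra ℂ A]
  (act : Q →ₗ[ℂ] A →ₗ[ℂ] A)

@[simp]
theorem cmRev_tmul (x : A) (y : Q) (z : A) :
    cmRev (Q := Q) (A := A) (x ⊗ₜ (y ⊗ₜ z)) = z ⊗ₜ (y ⊗ₜ x) := by
  simp [cmRev]

theorem act_flip_one (hact_alg_one : ∀ q : Q, act q 1 = counit (R := ℂ) q • (1 : A)) :
    act.flip 1 = (counit : Q →ₗ[ℂ] ℂ).smulRight (1 : A) := by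
  ext q
  simp [hact_alg_one]

theorem cmMulRHS_one_one (hact_alg_one : ∀ q : Q, act q 1 = counit (R := ℂ) q • (1 : A))
    (a : A) (x : Q) (a' : A) (z : Q) :
    cmMulRHS act a x 1 a' z 1 =
      map (LinearMap.mulLeft ℂ a ∘ₗ act.flip a')
        ((TensorProduct.mk ℂ Q A).flip 1 ∘ₗ LinearMap.mulRight ℂ z) (comul x) := by
  rw [cmMulRHS, comul2, LinearMap.comp_apply, LinearMap.map_lTensor, act_flip_one act hact_alg_one,
    LinearMap.mulRight_one, LinearMap.id_comp, map_comp_smulRight_counit_comul]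

theorem cmAntipodeRHS_one_left (hact_alg_one : ∀ q : Q, act q 1 = counit (R := ℂ) q • (1 : A))
    (y : Q) (b : A) :
    cmAntipodeRHS act 1 y b =
      cmRev (1 ⊗ₜ map (antipode ℂ) (act.flip b ∘ₗ antipode ℂ) (comul y)) := by
  have hcounit : act.flip 1 ∘ₗ antipode ℂ = (counit : Q →ₗ[ℂ] ℂ).smulRight (1 : A) := by
    ext q
    simp [hact_alg_one]
  rw [cmAntipodeRHS, comul2, LinearMap.comp_apply, LinearMap.map_lTensor, hcounit,
    ← LinearMap.comp_apply (map _ _) comul, map_smulRight_counit_comp_comul]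
  rfl

def cmSandwich (a b : A) : Q ⊗[ℂ] (Q ⊗[ℂ] Q) →ₗ[ℂ] A ⊗[ℂ] (Q ⊗[ℂ] A) :=
  map (LinearMap.mulLeft ℂ a ∘ₗ lift (act.compl₂ (act.flip b ∘ₗ antipode ℂ)))
      ((TensorProduct.mk ℂ Q A).flip 1) ∘ₗ
    (TensorProduct.assoc ℂ Q Q Q).symm.toLinearMap ∘ₗ
    LinearMap.lTensor Q (TensorProduct.comm ℂ Q Q).toLinearMap

@[simp]
theorem cmSandwich_tmul (a b : A) (x w y : Q) :
    cmSandwich act a b (x ⊗ₜ (w ⊗ₜ y)) = (a * act x (act (antipode ℂ y) b)) ⊗ₜ (w ⊗ₜ 1) := by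
  simp [cmSandwich]

theorem cm_mul_antipode_eq_cmSandwich
    (hact_alg_one : ∀ q : Q, act q 1 = counit (R := ℂ) q • (1 : A))
    (m : (A ⊗[ℂ] (Q ⊗[ℂ] A)) →ₗ[ℂ] (A ⊗[ℂ] (Q ⊗[ℂ] A)) →ₗ[ℂ] (A ⊗[ℂ] (Q ⊗[ℂ] A)))
    (hm : ∀ (a : A) (q : Q) (b a' : A) (q' : Q) (b' : A),
      m (a ⊗ₜ[ℂ] (q ⊗ₜ[ℂ] b)) (a' ⊗ₜ[ℂ] (q' ⊗ₜ[ℂ] b')) = cmMulRHS act a q b a' q' b')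
    (S : (A ⊗[ℂ] (Q ⊗[ℂ] A)) →ₗ[ℂ] (A ⊗[ℂ] (Q ⊗[ℂ] A)))
    (hS : ∀ (a : A) (q : Q) (b : A), S (a ⊗ₜ[ℂ] (q ⊗ₜ[ℂ] b)) = cmAntipodeRHS act a q b)
    (a b : A) (x y : Q) :
    m (a ⊗ₜ (x ⊗ₜ 1)) (S (1 ⊗ₜ (y ⊗ₜ b))) =
      cmSandwich act a b (mulAntipodeMiddle ℂ Q (comul x ⊗ₜ comul y)) := by
  rw [hS, cmAntipodeRHS_one_left act hact_alg_one]
  induction comul (R := ℂ) y using TensorProduct.induction_on with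
  | zero => simp
  | add v w hv hw => simp only [map_add, tmul_add, hv, hw]
  | tmul y₁ y₂ =>
    rw [map_tmul, cmRev_tmul, hm, cmMulRHS_one_one act hact_alg_one]
    induction comul (R := ℂ) x using TensorProduct.induction_on with
    | zero => simp
    | add v w hv hw => simp only [map_add, add_tmul, hv, hw]
    | tmul x₁ x₂ => simp

theorem cmSandwich_lTensor_mk_one_comul (hact_one : ∀ a : A, act 1 a = a)
    (hact_mul : ∀ (q q' : Q) (a : A), act (q * q') a = act q (act q' a)) (a b : A) (q : Q) :
    cmSandwich act a b (LinearMap.lTensor Q (TensorProduct.mk ℂ Q Q 1) (comul q)) =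
      (counit (R := ℂ) q • (a * b)) ⊗ₜ ((1 : Q) ⊗ₜ (1 : A)) := by
  have h : cmSandwich act a b ∘ₗ LinearMap.lTensor Q (TensorProduct.mk ℂ Q Q 1) =
      (TensorProduct.mk ℂ A (Q ⊗[ℂ] A)).flip (1 ⊗ₜ 1) ∘ₗ LinearMap.mulLeft ℂ a ∘ₗ act.flip b ∘ₗ
        LinearMap.mul' ℂ Q ∘ₗ (antipode ℂ).lTensor Q := by
    ext x y
    simp [hact_mul]
  rw [← LinearMap.comp_apply (cmSandwich act a b), h]
  simp [mul_antipode_lTensor_comul_apply, Algebra.algebraMap_eq_smul_one, hact_one, smul_tmul']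

end ConnesMoscovici

theorem cm_antipode_axiom_right_general
    {Q A : Type*} [Ring Q] [HopfAlgebra ℂ Q] [Ring A] [Algebra ℂ A]
    (act : Q →ₗ[ℂ] A →ₗ[ℂ] A)
    (hact_one : ∀ a : A, act 1 a = a)
    (hact_mul : ∀ (q q' : Q) (a : A), act (q * q') a = act q (act q' a))
    (hact_alg_one : ∀ q : Q, act q 1 = Coalgebra.counit (R := ℂ) q • (1 : A))
    -- the Connes–Moscovici multiplication on `H`:
    (m : (A ⊗[ℂ] (Q ⊗[ℂ] A)) →ₗ[ℂ] (A ⊗[ℂ] (Q ⊗[ℂ] A)) →ₗ[ℂ] (A ⊗[ℂ] (Q ⊗[ℂ] A)))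
    (hm : ∀ (a : A) (q : Q) (b a' : A) (q' : Q) (b' : A),
      m (a ⊗ₜ[ℂ] (q ⊗ₜ[ℂ] b)) (a' ⊗ₜ[ℂ] (q' ⊗ₜ[ℂ] b')) = cmMulRHS act a q b a' q' b')
    -- the antipode of `H`:
    (S : (A ⊗[ℂ] (Q ⊗[ℂ] A)) →ₗ[ℂ] (A ⊗[ℂ] (Q ⊗[ℂ] A)))
    (hS : ∀ (a : A) (q : Q) (b : A),
      S (a ⊗ₜ[ℂ] (q ⊗ₜ[ℂ] b)) = cmAntipodeRHS act a q b) :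
    ∀ (a : A) (q : Q) (b : A),
      TensorProduct.lift ((m.comp (cmLegL a)).compl₂ (S.comp (cmLegR b)))
          (Coalgebra.comul (R := ℂ) q) =
        (Coalgebra.counit (R := ℂ) q • (a * b)) ⊗ₜ[ℂ] ((1 : Q) ⊗ₜ[ℂ] (1 : A)) := by
  intro a q b
  have expand : TensorProduct.lift ((m.comp (cmLegL a)).compl₂ (S.comp (cmLegR b))) =
      cmSandwich act a b ∘ₗ mulAntipodeMiddle ℂ Q ∘ₗ map comul comul :=
    TensorProduct.ext' fun x y => by
      simpa [cmLegL, cmLegR] using cm_mul_antipode_eq_cmSandwich act hact_alg_one m hm S hS a b x y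
  rw [expand, LinearMap.comp_apply, LinearMap.comp_apply, mulAntipodeMiddle_map_comul_comul,
    cmSandwich_lTensor_mk_one_comul act hact_one hact_mul]

/-- Second antipode axiom for the Connes–Moscovici Hopf algebroid:
`Σ (a ⊗ q₍₁₎ ⊗ 1)·S(1 ⊗ q₍₂₎ ⊗ b) = (a ε(q) b) ⊗ 1 ⊗ 1`,
i.e. `μ_H (id ⊗ S) Δ_r = s_l ε_l`. -/
theorem cm_antipode_axiom_right
    {Q A : Type*} [Ring Q] [HopfAlgebra ℂ Q] [Ring A] [Algebra ℂ A]
    (act : Q →ₗ[ℂ] A →ₗ[ℂ] A)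
    (hact_one : ∀ a : A, act 1 a = a)
    (hact_mul : ∀ (q q' : Q) (a : A), act (q * q') a = act q (act q' a))
    (hact_alg_mul : ∀ (q : Q) (a a' : A),
      act q (a * a') =
        LinearMap.mul' ℂ A
          (TensorProduct.map (act.flip a) (act.flip a') (Coalgebra.comul (R := ℂ) q)))
    (hact_alg_one : ∀ q : Q, act q 1 = Coalgebra.counit (R := ℂ) q • (1 : A))
    (hT : ∀ q : Q, HopfAlgebra.antipode (R := ℂ) (HopfAlgebra.antipode (R := ℂ) q) = q)
    -- the Connes–Moscovici multiplication on `H`: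
    (m : (A ⊗[ℂ] (Q ⊗[ℂ] A)) →ₗ[ℂ] (A ⊗[ℂ] (Q ⊗[ℂ] A)) →ₗ[ℂ] (A ⊗[ℂ] (Q ⊗[ℂ] A)))
    (hm : ∀ (a : A) (q : Q) (b a' : A) (q' : Q) (b' : A),
      m (a ⊗ₜ[ℂ] (q ⊗ₜ[ℂ] b)) (a' ⊗ₜ[ℂ] (q' ⊗ₜ[ℂ] b')) = cmMulRHS act a q b a' q' b')
    -- the antipode of `H`:
    (S : (A ⊗[ℂ] (Q ⊗[ℂ] A)) →ₗ[ℂ] (A ⊗[ℂ] (Q ⊗[ℂ] A)))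
    (hS : ∀ (a : A) (q : Q) (b : A),
      S (a ⊗ₜ[ℂ] (q ⊗ₜ[ℂ] b)) = cmAntipodeRHS act a q b) :
    ∀ (a : A) (q : Q) (b : A),
      TensorProduct.lift ((m.comp (cmLegL a)).compl₂ (S.comp (cmLegR b)))
          (Coalgebra.comul (R := ℂ) q) =
        (Coalgebra.counit (R := ℂ) q • (a * b)) ⊗ₜ[ℂ] ((1 : Q) ⊗ₜ[ℂ] (1 : A)) :=
  cm_antipode_axiom_right_general act hact_one hact_mul hact_alg_one m hm S hS
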